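/- Let 0 < μ < L and λ := 2 / ( sqrt( ((L-μ)²/μ²)(4L-μ)² + 8L(2L-μ)(L-μ)/μ ) - ((L-μ)/μ)(4L-μ) ). Then (λL + (1/2)·μ/(L-μ)) · 2/(λL - 1) = 2λL/(1 - λ(L-μ)), and this common value lies in the open interval ( 4L/μ, 4L/μ + L/(L-μ) ). -/

import Mathlib

open Filter Finset
open scoped RealInnerProductSpace Topology

noncomputable def lamConst (μ L : ℝ) : ℝ :=
  2 / (Real.sqrt ((L - μ) ^ 2 / μ ^ 2 * (4 * L - μ) ^ 2 +
        8 * L * (2 * L - μ) * (L - μ) / μ) - (L - μ) / μ * (4 * L - μ))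

theorem lam_identity_and_bounds (μ L : ℝ) (hμ : 0 < μ) (hμL : μ < L) :
    (lamConst μ L * L + 1 / 2 * (μ / (L - μ))) * (2 / (lamConst μ L * L - 1)) =
      2 * lamConst μ L * L / (1 - lamConst μ L * (L - μ)) ∧
    2 * lamConst μ L * L / (1 - lamConst μ L * (L - μ)) ∈
      Set.Ioo (4 * L / μ) (4 * L / μ + L / (L - μ)) := by
  have hLμ : 0 < L - μ := by linarith
  have hL : 0 < L := by linarith
  have h2Lμ : 0 < 2 * L - μ := by linarith
  have hμ0 : μ ≠ 0 := ne_of_gt hμ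
  obtain ⟨D, hD⟩ : ∃ D : ℝ,
      D = (L - μ) ^ 2 / μ ^ 2 * (4 * L - μ) ^ 2 + 8 * L * (2 * L - μ) * (L - μ) / μ := ⟨_, rfl⟩
  obtain ⟨ab, hab⟩ : ∃ ab : ℝ, ab = (L - μ) / μ * (4 * L - μ) := ⟨_, rfl⟩
  have habμ : ab * μ = (L - μ) * (4 * L - μ) := by rw [hab]; field_simp
  have hab0 : 0 < ab := by rw [hab]; exact mul_pos (div_pos hLμ hμ) (by linarith)
  have hDab : D * μ = ab * ab * μ + 8 * L * (2 * L - μ) * (L - μ) := by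
    rw [hD, hab]; field_simp
  have hM0 : 0 < 8 * L * (2 * L - μ) * (L - μ) :=
    mul_pos (mul_pos (by linarith) h2Lμ) hLμ
  have hD0 : 0 ≤ D := by nlinarith [mul_pos (mul_pos hab0 hab0) hμ]
  obtain ⟨s, hs⟩ : ∃ s : ℝ, s = Real.sqrt D := ⟨_, rfl⟩
  have hs2 : s ^ 2 = D := by rw [hs]; exact Real.sq_sqrt hD0
  have hs0 : 0 ≤ s := by rw [hs]; exact Real.sqrt_nonneg _
  have hsab : ab < s := by
    by_contra hcon
    push_neg at hcon
    have h1 : 0 ≤ (ab - s) * (ab + s) * μ :=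
      mul_nonneg (mul_nonneg (by linarith) (by linarith)) hμ.le
    have hs2μ : s ^ 2 * μ = D * μ := by rw [hs2]
    linarith [h1, hs2μ, hDab, hM0]
  obtain ⟨t, ht⟩ : ∃ t : ℝ, t = s - ab := ⟨_, rfl⟩
  have ht0 : 0 < t := by rw [ht]; linarith
  have htne : t ≠ 0 := ne_of_gt ht0
  have hq : μ * t ^ 2 + 2 * (L - μ) * (4 * L - μ) * t = 8 * L * (2 * L - μ) * (L - μ) := by
    linear_combination μ * (t + s + ab) * ht + μ * hs2 + hDab - 2 * t * habμ
  have hlam : lamConst μ L = 2 / t := by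
    rw [lamConst, ← hD, ← hab, ← hs, ← ht]
  -- t < 2L - μ
  have htub : t < 2 * L - μ := by
    by_contra hcon
    push_neg at hcon
    have h2 : 0 ≤ μ * (t + (2 * L - μ)) + 2 * (L - μ) * (4 * L - μ) := by
      have p1 : 0 < μ * (t + (2 * L - μ)) := mul_pos hμ (by linarith)
      have p2 : 0 < 2 * (L - μ) * (4 * L - μ) :=
        mul_pos (mul_pos (by norm_num) hLμ) (by linarith)
      linarith
    have h1 := mul_nonneg (by linarith : (0:ℝ) ≤ t - (2 * L - μ)) h2
    have hpos : 0 < (2 * L - μ) * μ ^ 2 := mul_pos h2Lμ (by positivity)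
    linarith [h1, hq, hpos]
  -- 2(L-μ) < t
  have htlb : 2 * (L - μ) < t := by
    by_contra hcon
    push_neg at hcon
    have h2 : 0 ≤ μ * (t + 2 * (L - μ)) + 2 * (L - μ) * (4 * L - μ) := by
      have p1 : 0 < μ * (t + 2 * (L - μ)) := mul_pos hμ (by linarith)
      have p2 : 0 < 2 * (L - μ) * (4 * L - μ) :=
        mul_pos (mul_pos (by norm_num) hLμ) (by linarith)
      linarith
    have h1 := mul_nonneg (by linarith : (0:ℝ) ≤ 2 * (L - μ) - t) h2
    have hpos : 0 < 8 * L * (L - μ) * μ := by positivity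
    linarith [h1, hq, hpos]
  -- (4L-3μ) t > 2(L-μ)(4L-μ)
  have ht4 : 2 * (L - μ) * (4 * L - μ) < (4 * L - 3 * μ) * t := by
    by_contra hcon
    push_neg at hcon
    have hc0 : 0 < 4 * L - 3 * μ := by linarith
    have hk0 : 0 < 2 * (L - μ) * (4 * L - μ) := by
      exact mul_pos (mul_pos (by linarith) hLμ) (by linarith)
    have h2 : 0 ≤ μ * (4 * L - 3 * μ) * t + 2 * (L - μ) * (4 * L - μ) * (4 * L - 3 * μ)
        + μ * (2 * (L - μ) * (4 * L - μ)) := by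
      have p1 := mul_pos (mul_pos hμ hc0) ht0
      have p2 := mul_pos hk0 hc0
      have p3 := mul_pos hμ hk0
      linarith
    have h1 := mul_nonneg
      (by linarith : (0:ℝ) ≤ 2 * (L - μ) * (4 * L - μ) - (4 * L - 3 * μ) * t) h2
    have hq' : (4 * L - 3 * μ) ^ 2 * (μ * t ^ 2 + 2 * (L - μ) * (4 * L - μ) * t) =
        (4 * L - 3 * μ) ^ 2 * (8 * L * (2 * L - μ) * (L - μ)) := by
      linear_combination (4 * L - 3 * μ) ^ 2 * hq
    have hpos : 0 < 8 * (2 * L - μ) * (L - μ) * μ ^ 3 := by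
      have := mul_pos (mul_pos h2Lμ hLμ) (by positivity : (0:ℝ) < μ ^ 3)
      linarith
    linarith [h1, hq', hpos]
  have hu0 : 0 < t - 2 * (L - μ) := by linarith
  have hune : t - 2 * (L - μ) ≠ 0 := ne_of_gt hu0
  have h2Lt0 : 0 < 2 * L - t := by linarith
  have h2Ltne : 2 * L - t ≠ 0 := ne_of_gt h2Lt0
  have e1 : 2 / t * L - 1 = (2 * L - t) / t := by field_simp
  have e2 : 1 - 2 / t * (L - μ) = (t - 2 * (L - μ)) / t := by field_simp
  have hV : 2 * lamConst μ L * L / (1 - lamConst μ L * (L - μ)) =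
      4 * L / (t - 2 * (L - μ)) := by
    rw [hlam, e2, div_div_eq_mul_div]
    congr 1
    field_simp
    norm_num
  refine ⟨?_, ?_, ?_⟩
  · rw [hV, hlam, e1, div_div_eq_mul_div]
    have hLHS : (2 / t * L + 1 / 2 * (μ / (L - μ))) * (2 * t / (2 * L - t)) =
        (4 * L * (L - μ) + t * μ) / ((L - μ) * (2 * L - t)) := by
      field_simp
      ring
    rw [hLHS, div_eq_div_iff (mul_ne_zero (ne_of_gt hLμ) h2Ltne) hune]
    linear_combination hq
  · rw [hV, div_lt_div_iff₀ hμ hu0]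
    linarith [mul_pos hL (by linarith : (0:ℝ) < (2 * L - μ) - t)]
  · rw [hV, div_add_div _ _ hμ0 (ne_of_gt hLμ), div_lt_div_iff₀ hu0 (mul_pos hμ hLμ)]
    linarith [mul_pos hL (sub_pos.mpr ht4)]
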